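/- arXiv:1904.08413 — 2 statements merged into one kernel-verified Lean document; each statement's English description precedes it below -/
import Mathlib

section
/- (Object duality, part (ii).) Let (V, D) be an EReal-extended L-convex set and define d_D v w := ⨆_{p ∈ D} (p w - p v) for v, w ∈ V. Then D is exactly the set of maps that are nonexpansive with respect to d_D: for every q : V → EReal, q ∈ D if and only if q w - q v ≤ d_D v w for all v, w ∈ V. -/
/-- Dual addition on `EReal`: `x ⊕ y = -((-x) + (-y))`. -/
noncomputable def oplus (x y : EReal) : EReal := -((-x) + (-y))

/-- The distance induced on the index set by an `EReal`-extended L-convex set. -/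
noncomputable def distD {V : Type*} (D : Set (V → EReal)) (v w : V) : EReal :=
  ⨆ p ∈ D, (p w - p v)

/-!
A nonexpansive `q` is recovered from the distances by the McShane-type formula
`q w = ⨅ v, d_D v w ⊕ q v`: the bound `≤` is nonexpansiveness, since `x - y ≤ d ↔ x ≤ d ⊕ y`,
and `≥` follows from `d_D w w ≤ 0`. Each `d_D v` lies in `D` as the supremum of the translates
`p - p v`, `p ∈ D`, and these lie in `D`: such a translate is `p ⊕ (-p v)` when `p v` is finite,
constantly `⊥` when `p v = ⊤`, and `p + ⊤ = ⨆ r : ℝ, p + r` when `p v = ⊥`.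
-/

lemma oplus_coe_right (x : EReal) (r : ℝ) : oplus x r = x + r := by
  induction x using EReal.rec with
  | bot => simp [oplus]
  | coe a => simp [oplus, ← EReal.coe_neg, ← EReal.coe_add]; ring
  | top => simp [oplus]

lemma zero_oplus (x : EReal) : oplus 0 x = x := by
  simp [oplus]

lemma oplus_le_oplus_right {x y : EReal} (h : x ≤ y) (z : EReal) : oplus x z ≤ oplus y z :=
  EReal.neg_le_neg_iff.2 (add_le_add (EReal.neg_le_neg_iff.2 h) le_rfl)

lemma sub_le_iff_le_oplus {x y d : EReal} : x - y ≤ d ↔ x ≤ oplus d y := by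
  induction y using EReal.rec with
  | bot =>
    rcases eq_or_ne x ⊥ with rfl | hx
    · simp
    · rcases eq_or_ne d ⊤ with rfl | hd
      · simp [oplus]
      · simp [EReal.sub_bot hx, oplus, hd, EReal.add_top_of_ne_bot, hx]
  | coe r => rw [oplus_coe_right, EReal.sub_le_iff_le_add (by simp) (by simp)]
  | top => simp [oplus]

lemma iSup_add_coe (x : EReal) : ⨆ r : ℝ, (x + r) = x + ⊤ := by
  induction x using EReal.rec with
  | bot => simp
  | coe a =>
    refine le_antisymm le_top (le_of_forall_lt fun b hb => lt_iSup_iff.2 ?_)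
    induction b using EReal.rec with
    | bot => exact ⟨0, by simp⟩
    | coe s => exact ⟨s - a + 1, by norm_cast; linarith⟩
    | top => simp at hb
  | top => simp

lemma distD_self_nonpos {V : Type*} (D : Set (V → EReal)) (v : V) : distD D v v ≤ 0 :=
  iSup₂_le fun _ _ => EReal.sub_self_le_zero

lemma sub_le_distD_of_mem {V : Type*} {D : Set (V → EReal)} {q : V → EReal} (hq : q ∈ D)
    (v w : V) : q w - q v ≤ distD D v w :=
  le_biSup (fun p : V → EReal => p w - p v) hq

section Closure

variable {V : Type*} {D : Set (V → EReal)}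
  (hSup : ∀ S ⊆ D, (fun v => ⨆ p ∈ S, p v) ∈ D)

include hSup

lemma const_bot_mem : (fun _ : V => (⊥ : EReal)) ∈ D := by
  simpa using hSup ∅ (Set.empty_subset _)

variable (hWt : ∀ p ∈ D, ∀ α : EReal, (fun v => oplus (p v) α) ∈ D)

include hWt

lemma add_top_mem {p : V → EReal} (hp : p ∈ D) : (fun v => p v + ⊤) ∈ D := by
  have hS : Set.range (fun (r : ℝ) v => oplus (p v) r) ⊆ D := by
    rintro _ ⟨r, rfl⟩
    exact hWt p hp r
  simpa only [iSup_range, oplus_coe_right, iSup_add_coe] using hSup _ hS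

lemma sub_apply_mem {p : V → EReal} (hp : p ∈ D) (v : V) : (fun w => p w - p v) ∈ D := by
  induction hv : p v using EReal.rec with
  | bot => simpa only [sub_eq_add_neg, EReal.neg_bot] using add_top_mem hSup hWt hp
  | coe a => simpa only [sub_eq_add_neg, ← EReal.coe_neg, oplus_coe_right] using hWt p hp (-a : ℝ)
  | top => simpa only [EReal.sub_top] using const_bot_mem hSup

lemma distD_mem (v : V) : distD D v ∈ D := by
  unfold distD
  have hS : (fun p w => p w - p v) '' D ⊆ D := by
    rintro _ ⟨p, hp, rfl⟩
    exact sub_apply_mem hSup hWt hp v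
  simpa only [iSup_image] using hSup _ hS

end Closure

lemma eq_iInf_oplus_distD {V : Type*} {D : Set (V → EReal)} {q : V → EReal}
    (hq : ∀ v w, q w - q v ≤ distD D v w) :
    q = fun w => ⨅ v, oplus (distD D v w) (q v) := by
  funext w
  refine le_antisymm (le_iInf fun v => sub_le_iff_le_oplus.1 (hq v w)) ?_
  calc ⨅ v, oplus (distD D v w) (q v)
      ≤ oplus (distD D w w) (q w) := iInf_le _ w
    _ ≤ oplus 0 (q w) := oplus_le_oplus_right (distD_self_nonpos D w) _
    _ = q w := zero_oplus _

theorem object_duality_lconvex {V : Type*} (D : Set (V → EReal))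
    (hOrd : ∀ S ⊆ D, (fun v => ⨆ p ∈ S, p v) ∈ D ∧ (fun v => ⨅ p ∈ S, p v) ∈ D)
    (hWt : ∀ p ∈ D, ∀ α : EReal, (fun v => oplus (p v) α) ∈ D) :
    ∀ q : V → EReal, q ∈ D ↔ ∀ v w, q w - q v ≤ distD D v w := by
  intro q
  refine ⟨sub_le_distD_of_mem, fun hq => ?_⟩
  have hSup : ∀ S ⊆ D, (fun v => ⨆ p ∈ S, p v) ∈ D := fun S hS => (hOrd S hS).1
  have hS : Set.range (fun v w => oplus (distD D v w) (q v)) ⊆ D :=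
    Set.range_subset_iff.2 fun v => hWt _ (distD_mem hSup hWt v) (q v)
  rw [eq_iInf_oplus_distD hq]
  simpa only [iInf_range] using (hOrd _ hS).2
end

section
/- (Map duality, part (ii).) Let (V, D) and (W, E) be EReal-extended L-convex sets, with induced distances d_D v v' := ⨆_{p ∈ D} (p v' - p v) on V and d_E w w' := ⨆_{q ∈ E} (q w' - q w) on W. Then a function φ : W → V defines a homomorphism from (V, D) to (W, E) (i.e. p ∘ φ ∈ E for every p ∈ D) if and only if φ is nonexpansive from (W, d_E) to (V, d_D), i.e. d_D (φ w) (φ w') ≤ d_E w w' for all w, w' ∈ W. -/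
lemma oplus_comm (x y : EReal) : oplus x y = oplus y x := by
  rw [oplus, oplus, add_comm]

lemma oplus_coe (x : EReal) (a : ℝ) : oplus x a = x + a := by
  rw [oplus, ← EReal.coe_neg,
    EReal.neg_add (.inr (EReal.coe_ne_top _)) (.inr (EReal.coe_ne_bot _)), neg_neg,
    EReal.coe_neg, sub_eq_add_neg, neg_neg]

lemma oplus_le_of_nonpos {x : EReal} (hx : x ≤ 0) (y : EReal) : oplus x y ≤ y := by
  rw [oplus, EReal.neg_le]
  exact le_add_of_nonneg_left (EReal.neg_nonneg.2 hx)

lemma le_oplus_of_sub_le {x y d : EReal} (h : x - y ≤ d) : x ≤ oplus y d := by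
  rcases eq_or_ne y ⊤ with rfl | hy
  · simp [oplus]
  rcases eq_or_ne d ⊤ with rfl | hd
  · simp [oplus]
  rw [oplus, EReal.neg_add (.inl (by simpa)) (.inr (by simpa)), neg_neg, sub_eq_add_neg, neg_neg,
    add_comm]
  exact (EReal.sub_le_iff_le_add (.inr hd) (.inl hy)).1 h

lemma EReal.add_eq_biSup_coe_le (x y : EReal) :
    x + y = ⨆ (a : ℝ) (_ : (a : EReal) ≤ y), x + a := by
  refine le_antisymm (EReal.add_le_of_forall_lt fun x' hx' y' hy' => ?_)
    (iSup₂_le fun a ha => add_le_add_right ha x)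
  obtain ⟨b, hy'b, hby⟩ := EReal.exists_between_coe_real hy'
  calc x' + y' ≤ x + b := add_le_add hx'.le hy'b.le
    _ ≤ _ := le_iSup₂ (f := fun (a : ℝ) (_ : (a : EReal) ≤ y) => x + a) b hby.le

lemma sub_le_distD {W : Type*} {E : Set (W → EReal)} {r : W → EReal} (hr : r ∈ E) (w₀ w : W) :
    r w - r w₀ ≤ distD E w₀ w :=
  le_iSup₂ (f := fun (q : W → EReal) (_ : q ∈ E) => q w - q w₀) r hr

lemma distD_self_nonpos_s17 {W : Type*} (E : Set (W → EReal)) (w : W) : distD E w w ≤ 0 :=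
  iSup₂_le fun _ _ => EReal.sub_self_le_zero

lemma distD_le_of_comp_mem {V W : Type*} {D : Set (V → EReal)} {E : Set (W → EReal)} {φ : W → V}
    (h : ∀ p ∈ D, p ∘ φ ∈ E) (w w' : W) : distD D (φ w) (φ w') ≤ distD E w w' :=
  iSup₂_le fun p hp => sub_le_distD (h p hp) w w'

section LConvex

variable {W : Type*} {E : Set (W → EReal)}

lemma biSup_mem (hSup : ∀ S ⊆ E, (fun w => ⨆ q ∈ S, q w) ∈ E) {ι : Type*} {s : Set ι}
    {f : ι → W → EReal} (hf : ∀ i ∈ s, f i ∈ E) : (fun w => ⨆ i ∈ s, f i w) ∈ E := by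
  simpa only [iSup_image] using hSup (f '' s) (Set.image_subset_iff.2 hf)

lemma biInf_mem (hInf : ∀ S ⊆ E, (fun w => ⨅ q ∈ S, q w) ∈ E) {ι : Type*} {s : Set ι}
    {f : ι → W → EReal} (hf : ∀ i ∈ s, f i ∈ E) : (fun w => ⨅ i ∈ s, f i w) ∈ E := by
  simpa only [iInf_image] using hInf (f '' s) (Set.image_subset_iff.2 hf)

variable (hSup : ∀ S ⊆ E, (fun w => ⨆ q ∈ S, q w) ∈ E)
  (hWt : ∀ q ∈ E, ∀ α : EReal, (fun w => oplus (q w) α) ∈ E)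
include hSup hWt

lemma add_const_mem {r : W → EReal} (hr : r ∈ E) (c : EReal) : (fun w => r w + c) ∈ E := by
  simp_rw [EReal.add_eq_biSup_coe_le _ c, ← oplus_coe]
  exact biSup_mem hSup fun a _ => hWt r hr a

lemma distD_mem_s17 (w₀ : W) : distD E w₀ ∈ E := by
  show (fun w => ⨆ r ∈ E, r w - r w₀) ∈ E
  exact biSup_mem hSup fun r hr => add_const_mem hSup hWt hr _

theorem mem_of_forall_sub_le_distD (hInf : ∀ S ⊆ E, (fun w => ⨅ q ∈ S, q w) ∈ E)
    {q : W → EReal} (hq : ∀ w₀ w, q w - q w₀ ≤ distD E w₀ w) : q ∈ E := by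
  have hcone : ∀ w₀ ∈ Set.univ, (fun w => oplus (distD E w₀ w) (q w₀)) ∈ E :=
    fun w₀ _ => hWt _ (distD_mem_s17 hSup hWt w₀) _
  convert biInf_mem hInf hcone using 1
  funext w
  simp only [Set.mem_univ, iInf_pos]
  refine le_antisymm (le_iInf fun w₀ => ?_) ((iInf_le _ w).trans ?_)
  · rw [oplus_comm]
    exact le_oplus_of_sub_le (hq w₀ w)
  · exact oplus_le_of_nonpos (distD_self_nonpos_s17 E w) _

end LConvex

theorem map_duality_lconvex_general {V W : Type*} (D : Set (V → EReal)) (E : Set (W → EReal))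
    (hOrdE : ∀ S ⊆ E, (fun w => ⨆ q ∈ S, q w) ∈ E ∧ (fun w => ⨅ q ∈ S, q w) ∈ E)
    (hWtE : ∀ q ∈ E, ∀ α : EReal, (fun w => oplus (q w) α) ∈ E)
    (φ : W → V) :
    (∀ p ∈ D, (p ∘ φ) ∈ E) ↔
    (∀ w w', distD D (φ w) (φ w') ≤ distD E w w') := by
  refine ⟨distD_le_of_comp_mem, fun hφ p hp => ?_⟩
  exact mem_of_forall_sub_le_distD (fun S hS => (hOrdE S hS).1) hWtE
    (fun S hS => (hOrdE S hS).2) fun w₀ w => (sub_le_distD hp (φ w₀) (φ w)).trans (hφ w₀ w)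

theorem map_duality_lconvex {V W : Type*} (D : Set (V → EReal)) (E : Set (W → EReal))
    (hOrdD : ∀ S ⊆ D, (fun v => ⨆ p ∈ S, p v) ∈ D ∧ (fun v => ⨅ p ∈ S, p v) ∈ D)
    (hWtD : ∀ p ∈ D, ∀ α : EReal, (fun v => oplus (p v) α) ∈ D)
    (hOrdE : ∀ S ⊆ E, (fun w => ⨆ q ∈ S, q w) ∈ E ∧ (fun w => ⨅ q ∈ S, q w) ∈ E)
    (hWtE : ∀ q ∈ E, ∀ α : EReal, (fun w => oplus (q w) α) ∈ E)
    (φ : W → V) :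
    (∀ p ∈ D, (p ∘ φ) ∈ E) ↔
    (∀ w w', distD D (φ w) (φ w') ≤ distD E w w') :=
  map_duality_lconvex_general D E hOrdE hWtE φ
end
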